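/- In the ring R_2 = Z_4[ω]/(ω²−2), both the group of units (U, ·) and the group of zero divisors (Z, +) have order eight and are isomorphic to Z_4 × Z_2. -/

import Mathlib

open Polynomial

/-- The ring `Z₄[ω]` with `ω² = a + bω`, i.e. `Z₄[X]/(X² − (a + bX))`. -/
abbrev Rring (a b : ZMod 4) := AdjoinRoot ((X : (ZMod 4)[X]) ^ 2 - (C a + C b * X))

/-- The element `ω` of `Rring a b`. -/
noncomputable abbrev w (a b : ZMod 4) : Rring a b := AdjoinRoot.root _

/-!
`Rring 2 0` is the quadratic algebra `ZMod 4[ω]` with `ω² = 2`. As `2` lies in the maximal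
ideal of the local ring `ZMod 4`, the norm `x² - 2y²` of `x + yω` is a unit exactly when `x` is,
so the ring is local and its non-units form the maximal ideal `{x + yω | x ∈ {0, 2}}`, which is
additively `ZMod 4 × ZMod 2` via `(y, x / 2)`. The unit group is generated by `1 + ω`, of
order 4, and by `-1`, of order 2, which is not a power of `1 + ω`.
-/

open IsLocalRing QuadraticAlgebra

@[to_additive]
theorem pow_val_add_of_pow_eq_one {M : Type*} [Monoid M] {n : ℕ} [NeZero n] {g : M}
    (hg : g ^ n = 1) (k l : ZMod n) : g ^ (k + l).val = g ^ k.val * g ^ l.val := by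
  rw [ZMod.val_add, ← pow_eq_pow_mod _ hg, pow_add]

namespace QuadraticAlgebra

variable {R : Type*}

instance [Fintype R] {a b : R} : Fintype (QuadraticAlgebra R a b) :=
  Fintype.ofEquiv _ (equivProd a b).symm

variable [CommRing R]

noncomputable def adjoinRootAlgEquiv (a b : R) :
    AdjoinRoot (X ^ 2 - (Polynomial.C a + Polynomial.C b * X) : R[X]) ≃ₐ[R]
      QuadraticAlgebra R a b :=
  AlgEquiv.ofAlgHom
    (AdjoinRoot.liftAlgHom _ (Algebra.ofId R _) ω (by
      simp [sq, omega_mul_omega_eq_add, Algebra.smul_def]))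
    (lift ⟨AdjoinRoot.root _, by
      have := AdjoinRoot.eval₂_root (X ^ 2 - (Polynomial.C a + Polynomial.C b * X) : R[X])
      rw [← sub_eq_zero, ← this]
      simp [sq, Algebra.smul_def]⟩)
    (algHom_ext (by simp))
    (AdjoinRoot.algHom_ext (by simp))

variable [IsLocalRing R] {a b : R}

theorem isUnit_iff_isUnit_re (ha : a ∈ maximalIdeal R) (hb : b ∈ maximalIdeal R)
    {z : QuadraticAlgebra R a b} : IsUnit z ↔ IsUnit z.re := by
  have h : z.norm - z.re ^ 2 ∈ maximalIdeal R := by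
    rw [norm_def, show z.re * z.re + b * z.re * z.im - a * z.im * z.im - z.re ^ 2 =
      b * (z.re * z.im) - a * (z.im * z.im) by ring]
    exact sub_mem (Ideal.mul_mem_right _ _ hb) (Ideal.mul_mem_right _ _ ha)
  have hnorm : z.norm ∈ maximalIdeal R ↔ z.re ^ 2 ∈ maximalIdeal R :=
    ⟨fun hn ↦ by simpa using sub_mem hn h, fun hr ↦ by simpa using add_mem h hr⟩
  rw [isUnit_iff_norm_isUnit, ← notMem_maximalIdeal, ← notMem_maximalIdeal, hnorm,
    (maximalIdeal.isMaximal R).isPrime.pow_mem_iff_mem 2 two_pos]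

theorem isLocalRing (ha : a ∈ maximalIdeal R) (hb : b ∈ maximalIdeal R) :
    IsLocalRing (QuadraticAlgebra R a b) :=
  .of_nonunits_add fun x y hx hy ↦ by
    simp only [mem_nonunits_iff, isUnit_iff_isUnit_re ha hb, re_add] at *
    exact nonunits_add hx hy

end QuadraticAlgebra

instance : IsLocalRing (ZMod 4) :=
  have : Fact (1 < 4) := ⟨by norm_num⟩
  .of_isUnit_or_isUnit_one_sub_self (by decide)

theorem ZMod.two_mem_maximalIdeal_four : (2 : ZMod 4) ∈ maximalIdeal (ZMod 4) := by
  rw [mem_maximalIdeal, mem_nonunits_iff]; decide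

abbrev R₂ : Type := QuadraticAlgebra (ZMod 4) 2 0

namespace R₂

instance : IsLocalRing R₂ := isLocalRing ZMod.two_mem_maximalIdeal_four (zero_mem _)

theorem isUnit_iff {z : R₂} : IsUnit z ↔ IsUnit z.re :=
  isUnit_iff_isUnit_re ZMod.two_mem_maximalIdeal_four (zero_mem _)

theorem mem_maximalIdeal_iff {z : R₂} : z ∈ maximalIdeal R₂ ↔ ¬ IsUnit z.re := by
  rw [mem_maximalIdeal, mem_nonunits_iff, isUnit_iff]

def onePlusOmega : R₂ˣ := ⟨1 + ω, 3 + ω, by decide, by decide⟩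

def unitsHom : Multiplicative (ZMod 4 × ZMod 2) →* R₂ˣ where
  toFun x := onePlusOmega ^ x.toAdd.1.val * (-1) ^ x.toAdd.2.val
  map_one' := by simp
  map_mul' x y := by
    simp only [toAdd_mul, Prod.fst_add, Prod.snd_add,
      pow_val_add_of_pow_eq_one (show onePlusOmega ^ 4 = 1 by decide),
      pow_val_add_of_pow_eq_one (show (-1 : R₂ˣ) ^ 2 = 1 by simp)]
    exact mul_mul_mul_comm ..

theorem unitsHom_bijective : Function.Bijective unitsHom := by
  refine ⟨by decide, fun z ↦ ?_⟩
  have h : ∀ z : R₂, IsUnit z.re → ∃ x, (unitsHom x : R₂) = z := by decide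
  obtain ⟨x, hx⟩ := h z (isUnit_iff.mp z.isUnit)
  exact ⟨x, Units.ext hx⟩

def nonunitsHom : ZMod 4 × ZMod 2 →+ R₂ where
  toFun p := p.1 • ω + p.2.val • 2
  map_zero' := by simp
  map_add' p q := by
    simp only [Prod.fst_add, Prod.snd_add, add_smul,
      nsmul_val_add_of_nsmul_eq_zero (show 2 • (2 : R₂) = 0 by decide)]
    abel

theorem nonunitsHom_mem (p : ZMod 4 × ZMod 2) : nonunitsHom p ∈ maximalIdeal R₂ :=
  mem_maximalIdeal_iff.mpr (by revert p; decide)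

theorem nonunitsHom_bijective : Function.Bijective
    (nonunitsHom.codRestrict (maximalIdeal R₂).toAddSubgroup nonunitsHom_mem) := by
  refine ⟨fun p q h ↦ ?_, fun ⟨z, hz⟩ ↦ ?_⟩
  · have inj : Function.Injective nonunitsHom := by decide
    exact inj (congrArg Subtype.val h)
  · have h : ∀ z : R₂, ¬ IsUnit z.re → ∃ p, nonunitsHom p = z := by decide
    obtain ⟨p, hp⟩ := h z (mem_maximalIdeal_iff.mp hz)
    exact ⟨p, Subtype.ext hp⟩

end R₂

theorem stmt1 :
    Nat.card (Rring 2 0)ˣ = 8 ∧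
    Nonempty ((Rring 2 0)ˣ ≃* Multiplicative (ZMod 4 × ZMod 2)) ∧
    ∃ H : AddSubgroup (Rring 2 0),
      (H : Set (Rring 2 0)) = {x : Rring 2 0 | ¬ IsUnit x} ∧
      Nat.card H = 8 ∧ Nonempty (H ≃+ ZMod 4 × ZMod 2) := by
  let e : Rring 2 0 ≃+* R₂ := (QuadraticAlgebra.adjoinRootAlgEquiv 2 0).toRingEquiv
  let unitsEquiv : (Rring 2 0)ˣ ≃* Multiplicative (ZMod 4 × ZMod 2) :=
    (Units.mapEquiv e.toMulEquiv).trans (MulEquiv.ofBijective _ R₂.unitsHom_bijective).symm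
  let M := (maximalIdeal R₂).toAddSubgroup
  let H := M.map e.symm.toAddEquiv.toAddMonoidHom
  let nonunitsEquiv : H ≃+ ZMod 4 × ZMod 2 :=
    (AddEquiv.addSubgroupMap e.symm.toAddEquiv M).symm.trans
      (AddEquiv.ofBijective _ R₂.nonunitsHom_bijective).symm
  refine ⟨?_, ⟨unitsEquiv⟩, H, ?_, ?_, ⟨nonunitsEquiv⟩⟩
  · simp [Nat.card_congr unitsEquiv.toEquiv]
  · ext x
    rw [SetLike.mem_coe, AddSubgroup.mem_map_equiv]
    simp [M, mem_maximalIdeal, mem_nonunits_iff]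
  · simp [Nat.card_congr nonunitsEquiv.toEquiv]
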